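/- Let U ∈ L_n be a planar tree with n leaves each internal vertex of valency ≥ 2, built by grafting corollas avoiding the last leaf, with weights in a monoid G, and evaluate it on inputs a₁,...,a_n in a unital A∞-algebra A (assigning m_{val(v),ν(v)} to each internal vertex). If j of the inputs equal the strict unit e_A and the total weight is β, then U^A_β(a₁,...,a_n) = 0 unless either the number of binary (valency-2) vertices is at least j, or j = n, β = 0 and U is a binary tree with n−1 binary vertices. -/

import Mathlib

/-- Planar rooted trees with a weight in `G` at every internal vertex. -/
inductive WTree (G : Type*) : Type _
  | leaf : WTree G
  | node : G → List (WTree G) → WTree G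

namespace WTree

variable {G : Type*}

mutual
  /-- Number of leaves. -/
  def nleaves : WTree G → ℕ
    | .leaf => 1
    | .node _ ts => nleavesL ts
  def nleavesL : List (WTree G) → ℕ
    | [] => 0
    | t :: ts => nleaves t + nleavesL ts
end

mutual
  /-- Number of binary (valency-2) internal vertices. -/
  def bcount : WTree G → ℕ
    | .leaf => 0
    | .node _ ts => (if ts.length = 2 then 1 else 0) + bcountL ts
  def bcountL : List (WTree G) → ℕ
    | [] => 0
    | t :: ts => bcount t + bcountL ts
end

mutual
  /-- Total weight (sum of all vertex weights). -/
  def totalW [AddCommMonoid G] : WTree G → G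
    | .leaf => 0
    | .node w ts => w + totalWL ts
  def totalWL [AddCommMonoid G] : List (WTree G) → G
    | [] => 0
    | t :: ts => totalW t + totalWL ts
end

mutual
  /-- The tree is binary: every internal vertex has exactly two incoming edges. -/
  def allBinary : WTree G → Bool
    | .leaf => true
    | .node _ ts => decide (ts.length = 2) && allBinaryL ts
  def allBinaryL : List (WTree G) → Bool
    | [] => true
    | t :: ts => allBinary t && allBinaryL ts
end

/-- The last element of a list of trees is a leaf. -/
def lastLeaf : List (WTree G) → Bool
  | [] => false
  | [.leaf] => true
  | [_] => false
  | _ :: ts => lastLeaf ts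

/-- The first element of a list of trees is a leaf. -/
def headLeaf : List (WTree G) → Bool
  | .leaf :: _ => true
  | _ => false

mutual
  /-- Membership in `L_n`: trees obtained by grafting corollas (of valency `≥ 2`)
  together while never grafting at the last leaf. -/
  def isL : WTree G → Bool
    | .leaf => false
    | .node _ ts => decide (2 ≤ ts.length) && childL ts && lastLeaf ts
  def childL : List (WTree G) → Bool
    | [] => true
    | .leaf :: ts => childL ts
    | .node w cs :: ts => isL (.node w cs) && childL ts
end

mutual
  /-- Membership in `R_n`: trees obtained by grafting corollas (of valency `≥ 2`)
  together while never grafting at the first leaf. -/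
  def isR : WTree G → Bool
    | .leaf => false
    | .node _ ts => decide (2 ≤ ts.length) && childR ts && headLeaf ts
  def childR : List (WTree G) → Bool
    | [] => true
    | .leaf :: ts => childR ts
    | .node w cs :: ts => isR (.node w cs) && childR ts
end

section Eval

variable {A : Type*} [AddCommGroup A] (m : G → ∀ k : ℕ, (Fin k → A) → A)

mutual
  /-- Evaluation of a weighted tree as a flow chart, assigning `m_{val(v), ν(v)}` to
  each internal vertex, the inputs being fed to the leaves in planar order. -/
  noncomputable def evalW : WTree G → List A → A
    | .leaf, vs => vs.headD 0
    | .node w ts, vs => m w ts.length (fun j => (evalWL ts vs).getD j.val 0)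
  noncomputable def evalWL : List (WTree G) → List A → List A
    | [], _ => []
    | t :: ts, vs => evalW t (vs.take (nleaves t)) :: evalWL ts (vs.drop (nleaves t))
end

end Eval

end WTree
/-!
A subtree evaluating to the unit `e` kills every vertex it feeds into, except a binary
vertex of weight `0`. By induction, a tree with nonzero evaluation therefore either has at
least as many binary vertices as unit inputs, or is fed only units, is binary of weight `0`
with one binary vertex fewer than leaves, and evaluates to `e` (as `m_{2,0}(e, e) = e`).
At a binary vertex of weight `0`, a child in the second case brings one unit input more
than it has binary vertices, and the vertex itself pays for it.
-/

theorem eq_zero_of_update_add {ι A B : Type*} [DecidableEq ι] [AddCommGroup A]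
    [AddCommGroup B] {f : (ι → A) → B} {x : ι → A} {i : ι}
    (hadd : ∀ a b, f (Function.update x i (a + b)) =
      f (Function.update x i a) + f (Function.update x i b))
    (hx : x i = 0) : f x = 0 := by
  have h := hadd 0 0
  rwa [add_zero, ← hx, Function.update_eq_self, left_eq_add] at h

namespace WTree

variable {G : Type*} {A : Type*} [AddCommGroup A]

@[simp]
theorem nleaves_node_pair (w : G) (t₁ t₂ : WTree G) :
    (node w [t₁, t₂]).nleaves = t₁.nleaves + t₂.nleaves := by
  simp [nleaves, nleavesL]

@[simp]
theorem bcount_node_pair (w : G) (t₁ t₂ : WTree G) :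
    (node w [t₁, t₂]).bcount = t₁.bcount + t₂.bcount + 1 := by
  simp only [bcount, bcountL, List.length_cons, List.length_nil, reduceIte]
  omega

theorem evalWL_length (m : G → ∀ k : ℕ, (Fin k → A) → A) (ts : List (WTree G))
    (vs : List A) : (evalWL m ts vs).length = ts.length := by
  induction ts generalizing vs with
  | nil => rfl
  | cons t ts ih => simp [evalWL, ih]

theorem exists_getD_eq_of_mem_evalWL {m : G → ∀ k : ℕ, (Fin k → A) → A}
    {ts : List (WTree G)} {vs : List A} {y : A} (hy : y ∈ evalWL m ts vs) :
    ∃ j : Fin ts.length, (evalWL m ts vs).getD j 0 = y := by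
  obtain ⟨j, hj, rfl⟩ := List.getElem_of_mem hy
  exact ⟨⟨j, evalWL_length m ts vs ▸ hj⟩, List.getD_eq_getElem _ _ hj⟩

theorem evalWL_ne_zero {m : G → ∀ k : ℕ, (Fin k → A) → A}
    (hz : ∀ (β : G) (k : ℕ) (x : Fin k → A) (i : Fin k), x i = 0 → m β k x = 0)
    {w : G} {ts : List (WTree G)} {vs : List A} (hne : evalW m (node w ts) vs ≠ 0) :
    ∀ y ∈ evalWL m ts vs, y ≠ 0 := by
  rintro y hy rfl
  obtain ⟨j, hj⟩ := exists_getD_eq_of_mem_evalWL hy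
  exact hne (hz w _ _ j hj)

theorem evalW_node_pair (m : G → ∀ k : ℕ, (Fin k → A) → A) (w : G) (t₁ t₂ : WTree G)
    {vs₁ vs₂ : List A} (h₁ : vs₁.length = t₁.nleaves) (h₂ : vs₂.length = t₂.nleaves) :
    evalW m (node w [t₁, t₂]) (vs₁ ++ vs₂) = m w 2 ![evalW m t₁ vs₁, evalW m t₂ vs₂] := by
  rw [evalW]
  congr 1
  funext j
  fin_cases j <;> simp [evalWL, ← h₁, List.take_of_length_le, h₂]

variable [AddCommMonoid G]

/-- The shape of a subtree that turns inputs all equal to the unit into the unit. -/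
def IsUnitTree (t : WTree G) : Prop :=
  t.totalW = 0 ∧ t.allBinary = true ∧ t.bcount + 1 = t.nleaves

theorem isUnitTree_leaf : IsUnitTree (leaf : WTree G) :=
  ⟨rfl, rfl, rfl⟩

theorem IsUnitTree.node_pair {t₁ t₂ : WTree G} (h₁ : t₁.IsUnitTree) (h₂ : t₂.IsUnitTree) :
    (node 0 [t₁, t₂]).IsUnitTree := by
  obtain ⟨hw₁, hb₁, hn₁⟩ := h₁
  obtain ⟨hw₂, hb₂, hn₂⟩ := h₂
  refine ⟨?_, ?_, ?_⟩
  · simp [totalW, totalWL, hw₁, hw₂]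
  · simp [allBinary, allBinaryL, hb₁, hb₂]
  · simp only [bcount_node_pair, nleaves_node_pair]
    omega

section UnitInputs

variable [DecidableEq A] (e : A) (m : G → ∀ k : ℕ, (Fin k → A) → A)

def UnitBound (t : WTree G) (vs : List A) : Prop :=
  vs.count e ≤ t.bcount ∨ (vs.count e = vs.length ∧ t.IsUnitTree ∧ evalW m t vs = e)

def HasUnitBound (t : WTree G) : Prop :=
  ∀ vs : List A, vs.length = t.nleaves → evalW m t vs ≠ 0 → UnitBound e m t vs

variable {e m}

theorem unitBound_leaf (a : A) : UnitBound e m leaf [a] := by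
  by_cases ha : a = e
  · exact .inr ⟨by simp [ha], isUnitTree_leaf, by simp [evalW, ha]⟩
  · exact .inl (by simp [bcount, ha])

theorem UnitBound.node_pair (hunit_l : ∀ a : A, m 0 2 ![e, a] = a)
    {t₁ t₂ : WTree G} {vs₁ vs₂ : List A} (hl₁ : vs₁.length = t₁.nleaves)
    (hl₂ : vs₂.length = t₂.nleaves) (h₁ : UnitBound e m t₁ vs₁)
    (h₂ : UnitBound e m t₂ vs₂) : UnitBound e m (node 0 [t₁, t₂]) (vs₁ ++ vs₂) := by
  rw [UnitBound, bcount_node_pair, List.count_append, List.length_append]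
  rcases h₁ with h₁ | ⟨hc₁, hu₁, he₁⟩ <;> rcases h₂ with h₂ | ⟨hc₂, hu₂, he₂⟩
  · omega
  · have := hu₂.2.2
    omega
  · have := hu₁.2.2
    omega
  · refine .inr ⟨by omega, hu₁.node_pair hu₂, ?_⟩
    rw [evalW_node_pair m 0 t₁ t₂ hl₁ hl₂, he₁, he₂, hunit_l]

theorem count_le_bcountL_or_mem_evalWL {ts : List (WTree G)}
    (hts : ∀ t ∈ ts, HasUnitBound e m t) {vs : List A} (hlen : vs.length = nleavesL ts)
    (hne : ∀ y ∈ evalWL m ts vs, y ≠ 0) :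
    vs.count e ≤ bcountL ts ∨ e ∈ evalWL m ts vs := by
  induction ts generalizing vs with
  | nil => simp_all [nleavesL]
  | cons t ts ih =>
    rw [nleavesL] at hlen
    simp only [evalWL, List.mem_cons, forall_eq_or_imp] at hne ⊢
    have hcount : vs.count e = (vs.take t.nleaves).count e + (vs.drop t.nleaves).count e := by
      rw [← List.count_append, List.take_append_drop]
    rw [hcount, bcountL]
    rcases hts t (by simp) _ (by rw [List.length_take]; omega) hne.1 with h | ⟨-, -, h⟩
    · rcases ih (fun t' ht' => hts t' (by simp [ht'])) (by rw [List.length_drop]; omega)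
        hne.2 with h' | h'
      · exact .inl (by omega)
      · exact .inr (.inr h')
    · exact .inr (.inl h.symm)

variable (hz : ∀ (β : G) (k : ℕ) (x : Fin k → A) (i : Fin k), x i = 0 → m β k x = 0)
  (hunit_l : ∀ a : A, m 0 2 ![e, a] = a)
  (hunit_k : ∀ (β : G) (k : ℕ) (x : Fin k → A) (i : Fin k),
    ¬(k = 2 ∧ β = 0) → x i = e → m β k x = 0)
include hz hunit_l hunit_k

theorem unitBound_node {w : G} {ts : List (WTree G)} (hts : ∀ t ∈ ts, HasUnitBound e m t)
    {vs : List A} (hlen : vs.length = (node w ts).nleaves)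
    (hne : evalW m (node w ts) vs ≠ 0) : UnitBound e m (node w ts) vs := by
  rcases count_le_bcountL_or_mem_evalWL hts hlen (evalWL_ne_zero hz hne) with h | he
  · exact .inl (by rw [bcount]; omega)
  obtain ⟨hk, rfl⟩ : ts.length = 2 ∧ w = 0 := by
    by_contra hk
    obtain ⟨j, hj⟩ := exists_getD_eq_of_mem_evalWL he
    exact hne (hunit_k w _ _ j hk hj)
  obtain ⟨t₁, t₂, rfl⟩ : ∃ t₁ t₂, ts = [t₁, t₂] := List.length_eq_two.mp hk
  rw [nleaves_node_pair] at hlen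
  have hl₁ : (vs.take t₁.nleaves).length = t₁.nleaves := by rw [List.length_take]; omega
  have hl₂ : (vs.drop t₁.nleaves).length = t₂.nleaves := by rw [List.length_drop]; omega
  rw [← List.take_append_drop t₁.nleaves vs] at hne ⊢
  rw [evalW_node_pair m 0 t₁ t₂ hl₁ hl₂] at hne
  have hne₁ : evalW m t₁ (vs.take t₁.nleaves) ≠ 0 := fun h => hne (hz 0 2 _ 0 h)
  have hne₂ : evalW m t₂ (vs.drop t₁.nleaves) ≠ 0 := fun h => hne (hz 0 2 _ 1 h)
  exact UnitBound.node_pair hunit_l hl₁ hl₂ (hts t₁ (by simp) _ hl₁ hne₁)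
    (hts t₂ (by simp) _ hl₂ hne₂)

theorem hasUnitBound (U : WTree G) : HasUnitBound e m U := by
  refine WTree.rec (motive_2 := fun ts => ∀ t ∈ ts, HasUnitBound e m t)
    ?leaf ?node ?nil ?cons U
  case leaf =>
    intro vs hlen _
    obtain ⟨a, rfl⟩ := List.length_eq_one_iff.mp hlen
    exact unitBound_leaf a
  case node => exact fun w ts ih vs => unitBound_node hz hunit_l hunit_k ih
  case nil => simp
  case cons => exact fun t ts iht ihts => by simpa using ⟨iht, ihts⟩

end UnitInputs

end WTree

/-- Let `U ∈ L_n` (or `R_n`) be a planar tree with `n` leaves, internal vertices of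
valency `≥ 2` and weights in a monoid `G`, evaluated on inputs `a₁, …, a_n` in a unital
A∞-algebra `A`.  If `j` of the inputs equal the strict unit `e_A` and the total weight
is `β`, then `U^A_β(a₁, …, a_n) = 0` unless either the number of binary vertices is at
least `j`, or `j = n`, `β = 0` and `U` is a binary tree with `n − 1` binary
vertices. -/
theorem stmt17 {A : Type*} [AddCommGroup A] [DecidableEq A]
    {G : Type*} [AddCommMonoid G]
    (e : A) (g : A → ℤ) (m : G → ∀ k : ℕ, (Fin k → A) → A)
    -- the operations are multilinear (additive in each slot)
    (hm_add : ∀ (β : G) (k : ℕ) (x : Fin k → A) (i : Fin k) (a b : A),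
      m β k (Function.update x i (a + b)) =
        m β k (Function.update x i a) + m β k (Function.update x i b))
    -- `e` is a strict unit: `m_{2,0}(e,a) = (-1)^{|a|} m_{2,0}(a,e) = a` and
    -- `m_{k,β}(…, e, …) = 0` for `(k, β) ≠ (2, 0)`
    (hunit_l : ∀ a : A, m 0 2 ![e, a] = a)
    (hunit_r : ∀ a : A, m 0 2 ![a, e] = (Int.negOnePow (g a) : ℤ) • a)
    (hunit_k : ∀ (β : G) (k : ℕ) (x : Fin k → A) (i : Fin k),
      ¬(k = 2 ∧ β = 0) → x i = e → m β k x = 0)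
    (U : WTree G) (hU : U.isL = true ∨ U.isR = true)
    (vs : List A) (hlen : vs.length = U.nleaves)
    (hne : WTree.evalW m U vs ≠ 0) :
    vs.count e ≤ U.bcount ∨
      (vs.count e = vs.length ∧ U.totalW = 0 ∧ U.allBinary = true ∧
        U.bcount = U.nleaves - 1) := by
  have hz : ∀ (β : G) (k : ℕ) (x : Fin k → A) (i : Fin k), x i = 0 → m β k x = 0 :=
    fun β k _ i => eq_zero_of_update_add (hm_add β k _ i)
  rcases WTree.hasUnitBound hz hunit_l hunit_k U vs hlen hne with
    h | ⟨hcount, ⟨hw, hb, hn⟩, -⟩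
  · exact .inl h
  · exact .inr ⟨hcount, hw, hb, by omega⟩
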